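/- arXiv:math/0301214 — 12 statements merged into one kernel-verified Lean document; each statement's English description precedes it below -/
import Mathlib

section
/- Let A be a C*-algebra with center Z(A), and let ψ_1, …, ψ_n be elements of A such that ψ_l* ψ_m ∈ Z(A) for all l, m and Σ_{l=1}^n ψ_l ψ_l* ψ_m = ψ_m for all m. Then the map σ : A → A defined by σ(a) := Σ_{l=1}^n ψ_l a ψ_l* is a *-homomorphism of A into itself: σ is linear, σ(ab) = σ(a)σ(b) for all a, b ∈ A, and σ(a*) = σ(a)* for all a ∈ A. -/
/-- The inner endomorphism induced by a finite family `ψ` in a C*-algebra: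
`σ(a) := Σ_l ψ_l a ψ_l*`. -/
def innerEndo {A : Type*} [NonUnitalRing A] [StarRing A] {n : ℕ}
    (ψ : Fin n → A) (a : A) : A :=
  ∑ l, ψ l * a * star (ψ l)

/-- If `ψ_l* ψ_m ∈ Z(A)` for all `l, m` and
`Σ_l ψ_l ψ_l* ψ_m = ψ_m` for all `m`, then `σ(a) := Σ_l ψ_l a ψ_l*` is a
*-homomorphism of `A` into itself: it is ℂ-linear, multiplicative and
star-preserving. -/
theorem innerEndo_is_star_hom
    {A : Type*} [NonUnitalNormedRing A] [StarRing A] [CStarRing A]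
    [NormedSpace ℂ A] [IsScalarTower ℂ A A] [SMulCommClass ℂ A A]
    [StarModule ℂ A] [CompleteSpace A]
    {n : ℕ} (ψ : Fin n → A)
    (hcen : ∀ l m, star (ψ l) * ψ m ∈ Set.center A)
    (hgen : ∀ m, (∑ l, ψ l * star (ψ l)) * ψ m = ψ m) :
    (∀ a b : A, innerEndo ψ (a + b) = innerEndo ψ a + innerEndo ψ b) ∧
    (∀ (c : ℂ) (a : A), innerEndo ψ (c • a) = c • innerEndo ψ a) ∧
    (∀ a b : A, innerEndo ψ (a * b) = innerEndo ψ a * innerEndo ψ b) ∧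
    (∀ a : A, innerEndo ψ (star a) = star (innerEndo ψ a)) := by
  have hS : star (∑ m, ψ m * star (ψ m)) = ∑ m, ψ m * star (ψ m) := by
    simp [star_sum]
  have key : ∀ l, star (ψ l) * ∑ m, ψ m * star (ψ m) = star (ψ l) := by
    intro l
    have h := congrArg star (hgen l)
    rwa [star_mul, hS] at h
  refine ⟨?_, ?_, ?_, ?_⟩
  · intro a b
    simp [innerEndo, mul_add, add_mul, Finset.sum_add_distrib]
  · intro c a
    simp [innerEndo, mul_smul_comm, smul_mul_assoc, Finset.smul_sum]
  · intro a b
    have step : ∀ l m : Fin n, (ψ l * a * star (ψ l)) * (ψ m * b * star (ψ m)) =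
        ψ l * (a * b) * (star (ψ l) * (ψ m * star (ψ m))) := by
      intro l m
      have hc : star (ψ l) * ψ m * b = b * (star (ψ l) * ψ m) :=
        (Set.mem_center_iff.mp (hcen l m)).comm b
      have h1 : (ψ l * a * star (ψ l)) * (ψ m * b * star (ψ m)) =
          ψ l * a * (star (ψ l) * ψ m * b) * star (ψ m) := by noncomm_ring
      rw [h1, hc]
      noncomm_ring
    symm
    calc innerEndo ψ a * innerEndo ψ b
        = ∑ l, ∑ m, (ψ l * a * star (ψ l)) * (ψ m * b * star (ψ m)) := by
          rw [innerEndo, innerEndo, Finset.sum_mul_sum]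
      _ = ∑ l, ∑ m, ψ l * (a * b) * (star (ψ l) * (ψ m * star (ψ m))) := by
          simp only [step]
      _ = ∑ l, ψ l * (a * b) * (star (ψ l) * ∑ m, ψ m * star (ψ m)) := by
          simp [Finset.mul_sum]
      _ = innerEndo ψ (a * b) := by
          simp only [key]; rfl
  · intro a
    simp [innerEndo, star_sum, mul_assoc]
end

section
/- Let A be a C*-algebra with center Z(A), and let ψ_1, …, ψ_n and φ_1, …, φ_k be elements of A such that ψ_l* φ_j ∈ Z(A) for all l, j, (Σ_{l=1}^n ψ_l ψ_l*)·φ_j = φ_j for every j, and (Σ_{j=1}^k φ_j φ_j*)·ψ_l = ψ_l for every l. Then Σ_{l=1}^n ψ_l a ψ_l* = Σ_{j=1}^k φ_j a φ_j* for every a ∈ A. (The inner endomorphism induced by a finitely generated Hilbert Z(A)-bimodule in A does not depend on the choice of generators.) -/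
/-!
Insert `1 = Σ_j φ_j φ_j*` (acting on the left of each `ψ_l`) into `Σ_l ψ_l a ψ_l*`. Since
`φ_j* ψ_l` is central it can be moved past `a`, which regroups the double sum as
`Σ_j φ_j a φ_j* (Σ_l ψ_l ψ_l*)`, and `φ_j* (Σ_l ψ_l ψ_l*) = φ_j*` is the adjoint of the
other unit condition.
-/

open Finset

section

variable {R : Type*} [NonUnitalSemiring R] [StarRing R]

theorem star_mul_eq_of_mul_eq {x y : R} (hx : IsSelfAdjoint x) (h : x * y = y) :
    star y * x = star y := by
  simpa only [star_mul, hx.star_eq] using congrArg star h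

theorem sum_conj_eq_sum_conj_mul_sum {ι κ : Type*} [Fintype ι] [Fintype κ]
    (ψ : ι → R) (φ : κ → R) (a : R) (hcomm : ∀ l j, Commute (star (φ j) * ψ l) a)
    (h : ∀ l, (∑ j, φ j * star (φ j)) * ψ l = ψ l) :
    ∑ l, ψ l * a * star (ψ l) = ∑ j, φ j * a * (star (φ j) * ∑ l, ψ l * star (ψ l)) :=
  calc ∑ l, ψ l * a * star (ψ l)
      = ∑ l, (∑ j, φ j * star (φ j)) * ψ l * a * star (ψ l) := by simp only [h]
    _ = ∑ l, ∑ j, φ j * (star (φ j) * ψ l * a) * star (ψ l) := by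
        simp only [sum_mul, mul_assoc]
    _ = ∑ l, ∑ j, φ j * (a * (star (φ j) * ψ l)) * star (ψ l) := by
        simp only [(hcomm _ _).eq]
    _ = ∑ j, φ j * a * (star (φ j) * ∑ l, ψ l * star (ψ l)) := by
        rw [sum_comm]
        simp only [mul_sum, mul_assoc]

end

theorem innerEndo_independent_of_generators_general
    {A : Type*} [NonUnitalNormedRing A] [StarRing A]
    {n k : ℕ} (ψ : Fin n → A) (φ : Fin k → A)
    (hcen : ∀ l j, star (ψ l) * φ j ∈ Set.center A)
    (h1 : ∀ j, (∑ l, ψ l * star (ψ l)) * φ j = φ j)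
    (h2 : ∀ l, (∑ j, φ j * star (φ j)) * ψ l = ψ l) :
    ∀ a : A, ∑ l, ψ l * a * star (ψ l) = ∑ j, φ j * a * star (φ j) := by
  intro a
  have hcomm : ∀ l j, Commute (star (φ j) * ψ l) a := fun l j => by
    simpa only [star_mul, star_star] using (Set.star_mem_center (hcen l j)).comm a
  have hP : IsSelfAdjoint (∑ l, ψ l * star (ψ l)) :=
    isSelfAdjoint_sum _ fun l _ => .mul_star_self (ψ l)
  rw [sum_conj_eq_sum_conj_mul_sum ψ φ a hcomm h2]
  simp only [star_mul_eq_of_mul_eq hP (h1 _)]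

/-- In a C*-algebra `A` with centre `Z(A)`, if `ψ_l* φ_j ∈ Z(A)` for all
`l, j`, `(Σ_l ψ_l ψ_l*) φ_j = φ_j` for every `j`, and `(Σ_j φ_j φ_j*) ψ_l = ψ_l` for
every `l`, then `Σ_l ψ_l a ψ_l* = Σ_j φ_j a φ_j*` for every `a ∈ A`: the inner
endomorphism does not depend on the choice of generators. -/
theorem innerEndo_independent_of_generators
    {A : Type*} [NonUnitalNormedRing A] [StarRing A] [CStarRing A]
    [NormedSpace ℂ A] [IsScalarTower ℂ A A] [SMulCommClass ℂ A A]
    [StarModule ℂ A] [CompleteSpace A]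
    {n k : ℕ} (ψ : Fin n → A) (φ : Fin k → A)
    (hcen : ∀ l j, star (ψ l) * φ j ∈ Set.center A)
    (h1 : ∀ j, (∑ l, ψ l * star (ψ l)) * φ j = φ j)
    (h2 : ∀ l, (∑ j, φ j * star (φ j)) * ψ l = ψ l) :
    ∀ a : A, ∑ l, ψ l * a * star (ψ l) = ∑ j, φ j * a * star (φ j) :=
  innerEndo_independent_of_generators_general ψ φ hcen h1 h2
end

section
/- Let A be a C*-algebra with center Z(A), let ψ_1, …, ψ_n ∈ A, and let ψ ∈ A be such that ψ_l* ψ ∈ Z(A) for every l and (Σ_{l=1}^n ψ_l ψ_l*)·ψ = ψ. Then for every a ∈ A one has ψ a = σ(a) ψ, where σ(a) := Σ_{l=1}^n ψ_l a ψ_l*. (Every element of a finitely generated Hilbert Z(A)-bimodule M in A intertwines the identity and the inner endomorphism induced by M.) -/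
/-- In a C*-algebra `A` with centre `Z(A)`, if `ψ_l* ψ ∈ Z(A)` for every
`l` and `(Σ_l ψ_l ψ_l*) ψ = ψ`, then `ψ a = σ(a) ψ` for every `a ∈ A`, where
`σ(a) := Σ_l ψ_l a ψ_l*`. -/
theorem module_element_intertwines
    {A : Type*} [NonUnitalNormedRing A] [StarRing A] [CStarRing A]
    [NormedSpace ℂ A] [IsScalarTower ℂ A A] [SMulCommClass ℂ A A]
    [StarModule ℂ A] [CompleteSpace A]
    {n : ℕ} (ψ : Fin n → A) (ψ' : A)
    (hcen : ∀ l, star (ψ l) * ψ' ∈ Set.center A)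
    (hsup : (∑ l, ψ l * star (ψ l)) * ψ' = ψ') :
    ∀ a : A, ψ' * a = (∑ l, ψ l * a * star (ψ l)) * ψ' := by
  intro a
  calc ψ' * a = ((∑ l, ψ l * star (ψ l)) * ψ') * a := by rw [hsup]
    _ = ∑ l, ψ l * ((star (ψ l) * ψ') * a) := by
        rw [Finset.sum_mul, Finset.sum_mul]
        exact Finset.sum_congr rfl fun l _ => by simp only [mul_assoc]
    _ = ∑ l, ψ l * (a * (star (ψ l) * ψ')) := by
        exact Finset.sum_congr rfl fun l _ => by rw [(hcen l).comm a]
    _ = (∑ l, ψ l * a * star (ψ l)) * ψ' := by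
        rw [Finset.sum_mul]
        exact Finset.sum_congr rfl fun l _ => by simp only [mul_assoc]
end

section
/- Let A be a unital C*-algebra with center Z(A), and let M be a closed linear subspace of A such that ψ* ψ' ∈ Z(A) for all ψ, ψ' ∈ M, ψ z ∈ M for all ψ ∈ M and z ∈ Z(A), and such that there exist ψ_1, …, ψ_n ∈ M with (Σ_{l=1}^n ψ_l ψ_l*)·ψ = ψ for every ψ ∈ M. Let σ_M(a) := Σ_{l=1}^n ψ_l a ψ_l*. Then M = { ψ ∈ A : ψ a = σ_M(a) ψ for all a ∈ A }. -/
/-- Let `A` be a unital C*-algebra with centre `Z(A)` and `M ⊆ A` a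
closed linear subspace with `ψ* ψ' ∈ Z(A)` for `ψ, ψ' ∈ M`, stable under right
multiplication by central elements, and finitely generated: there are
`ψ_1, …, ψ_n ∈ M` with `(Σ_l ψ_l ψ_l*) ψ = ψ` for all `ψ ∈ M`.  Then
`M = { ψ ∈ A : ψ a = σ_M(a) ψ for all a }`, where `σ_M(a) := Σ_l ψ_l a ψ_l*`. -/
theorem bimodule_eq_intertwiners
    {A : Type*} [NormedRing A] [StarRing A] [CStarRing A]
    [NormedAlgebra ℂ A] [StarModule ℂ A] [CompleteSpace A]
    (M : Submodule ℂ A) (hclosed : IsClosed (M : Set A))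
    (hcen : ∀ ψ ∈ M, ∀ ψ' ∈ M, star ψ * ψ' ∈ Set.center A)
    (hmulZ : ∀ ψ ∈ M, ∀ z ∈ Set.center A, ψ * z ∈ M)
    {n : ℕ} (ψ : Fin n → A) (hψ : ∀ l, ψ l ∈ M)
    (hgen : ∀ m ∈ M, (∑ l, ψ l * star (ψ l)) * m = m) :
    (M : Set A) = {x : A | ∀ a : A, x * a = (∑ l, ψ l * a * star (ψ l)) * x} := by
  ext x
  simp only [Set.mem_setOf_eq, SetLike.mem_coe]
  constructor
  · intro hx a
    calc x * a = ((∑ l, ψ l * star (ψ l)) * x) * a := by rw [hgen x hx]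
      _ = ∑ l, ψ l * star (ψ l) * x * a := by rw [Finset.sum_mul, Finset.sum_mul]
      _ = ∑ l, ψ l * a * star (ψ l) * x := by
          refine Finset.sum_congr rfl fun l _ => ?_
          have hc := Semigroup.mem_center_iff.mp (hcen _ (hψ l) _ hx)
          simp only [mul_assoc]
          rw [hc a]
          simp only [mul_assoc]
      _ = (∑ l, ψ l * a * star (ψ l)) * x := by rw [Finset.sum_mul]
  · intro hx
    have hx1 : x = (∑ l, ψ l * star (ψ l)) * x := by
      have := hx 1
      simpa using this
    have hc : ∀ k : Fin n, star (ψ k) * x ∈ Set.center A := by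
      intro k
      refine Semigroup.mem_center_iff.mpr fun a => ?_
      have key : star (ψ k) * (x * a) = a * (star (ψ k) * x) := by
        rw [hx a]
        calc star (ψ k) * ((∑ l, ψ l * a * star (ψ l)) * x)
            = ∑ l, star (ψ k) * (ψ l * a * star (ψ l)) * x := by
              rw [← mul_assoc, Finset.mul_sum, Finset.sum_mul]
          _ = ∑ l, a * (star (ψ k) * (ψ l * star (ψ l) * x)) := by
              refine Finset.sum_congr rfl fun l _ => ?_
              have hz := Semigroup.mem_center_iff.mp (hcen _ (hψ k) _ (hψ l))
              calc star (ψ k) * (ψ l * a * star (ψ l)) * x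
                  = (star (ψ k) * ψ l) * a * (star (ψ l) * x) := by
                    simp only [mul_assoc]
                _ = a * (star (ψ k) * ψ l) * (star (ψ l) * x) := by
                    rw [← hz a]
                _ = a * (star (ψ k) * (ψ l * star (ψ l) * x)) := by
                    simp only [mul_assoc]
          _ = a * (star (ψ k) * ((∑ l, ψ l * star (ψ l)) * x)) := by
              rw [← Finset.mul_sum, ← Finset.mul_sum, ← Finset.sum_mul]
          _ = a * (star (ψ k) * x) := by rw [← hx1]
      rw [← key, ← mul_assoc]
    have : x = ∑ l, ψ l * (star (ψ l) * x) := by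
      conv_lhs => rw [hx1]
      rw [Finset.sum_mul]
      exact Finset.sum_congr rfl fun l _ => mul_assoc _ _ _
    rw [this]
    exact Submodule.sum_mem M fun l _ => hmulZ _ (hψ l) _ (hc l)
end

section
/- Let A be a C*-algebra with center Z(A), and let ψ_1, …, ψ_n and φ_1, …, φ_k be elements of A such that all of the elements ψ_l* ψ_m, φ_i* φ_j and ψ_l* φ_j lie in Z(A), (Σ_{l=1}^n ψ_l ψ_l*)·φ_j = φ_j and (Σ_{l=1}^n ψ_l ψ_l*)·ψ_m = ψ_m for all j, m, and (Σ_{j=1}^k φ_j φ_j*)·ψ_l = ψ_l and (Σ_{j=1}^k φ_j φ_j*)·φ_i = φ_i for all l, i. Then Σ_{l,m} ψ_m ψ_l ψ_m* ψ_l* = Σ_{i,j} φ_j φ_i φ_j* φ_i*. (The symmetry operator θ of a finitely generated Hilbert Z(A)-bimodule in A, with coinciding left and right central actions, does not depend on the choice of generators.) -/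
lemma term_id {A : Type*} [NonUnitalRing A] [StarRing A] (a b x : A)
    (hx : star b * x ∈ Set.center A) :
    a * (b * (star b * x)) * star a * star x
      = a * b * star a * star b * (x * star x) := by
  have h := (Semigroup.mem_center_iff.mp hx)
  simp only [mul_assoc]
  congr 2
  calc star b * (x * (star a * star x))
      = (star a * star x) * (star b * x) := by rw [← mul_assoc, ← h]
    _ = star a * (star x * (star b * x)) := by rw [mul_assoc]
    _ = star a * ((star b * x) * star x) := by rw [h]
    _ = star a * (star b * (x * star x)) := by rw [mul_assoc]

lemma key_lemma {A : Type*} [NonUnitalRing A] [StarRing A]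
    {n k : ℕ} (ψ : Fin n → A) (φ : Fin k → A)
    (hc : ∀ j l, star (φ j) * ψ l ∈ Set.center A)
    (h1 : ∀ j, (∑ l, ψ l * star (ψ l)) * φ j = φ j)
    (h2 : ∀ l, (∑ j, φ j * star (φ j)) * ψ l = ψ l) :
    ∑ l, ∑ m, ψ m * ψ l * star (ψ m) * star (ψ l)
      = ∑ m, ∑ j, ψ m * φ j * star (ψ m) * star (φ j) := by
  have he : star (∑ l, ψ l * star (ψ l)) = ∑ l, ψ l * star (ψ l) := by
    simp [star_sum, star_mul]
  have hφe : ∀ j, star (φ j) * (∑ l, ψ l * star (ψ l)) = star (φ j) := by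
    intro j
    have := congrArg star (h1 j)
    rwa [star_mul, he] at this
  calc ∑ l, ∑ m, ψ m * ψ l * star (ψ m) * star (ψ l)
      = ∑ m, ∑ l, ∑ j, ψ m * (φ j * (star (φ j) * ψ l)) * star (ψ m) * star (ψ l) := by
        rw [Finset.sum_comm]
        refine Finset.sum_congr rfl fun m _ => Finset.sum_congr rfl fun l _ => ?_
        rw [show ψ m * ψ l = ∑ j, ψ m * (φ j * (star (φ j) * ψ l)) by
          conv_lhs => rw [← h2 l]
          rw [Finset.sum_mul, Finset.mul_sum]
          exact Finset.sum_congr rfl fun j _ => by rw [mul_assoc]]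
        rw [Finset.sum_mul, Finset.sum_mul]
    _ = ∑ m, ∑ j, ∑ l, ψ m * φ j * star (ψ m) * star (φ j) * (ψ l * star (ψ l)) := by
        refine Finset.sum_congr rfl fun m _ => ?_
        rw [Finset.sum_comm]
        exact Finset.sum_congr rfl fun j _ => Finset.sum_congr rfl fun l _ =>
          term_id (ψ m) (φ j) (ψ l) (hc j l)
    _ = ∑ m, ∑ j, ψ m * φ j * star (ψ m) * star (φ j) := by
        refine Finset.sum_congr rfl fun m _ => Finset.sum_congr rfl fun j _ => ?_
        rw [← Finset.mul_sum, mul_assoc, hφe]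

/-- The symmetry operator `θ := Σ_{l,m} ψ_m ψ_l ψ_m* ψ_l*` of a finitely
generated Hilbert `Z(A)`-bimodule in a C*-algebra `A` does not depend on the choice
of generators. -/
theorem symmetry_independent_of_generators
    {A : Type*} [NonUnitalNormedRing A] [StarRing A] [CStarRing A]
    [NormedSpace ℂ A] [IsScalarTower ℂ A A] [SMulCommClass ℂ A A]
    [StarModule ℂ A] [CompleteSpace A]
    {n k : ℕ} (ψ : Fin n → A) (φ : Fin k → A)
    (hcenψ : ∀ l m, star (ψ l) * ψ m ∈ Set.center A)
    (hcenφ : ∀ i j, star (φ i) * φ j ∈ Set.center A)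
    (hcenψφ : ∀ l j, star (ψ l) * φ j ∈ Set.center A)
    (h1 : ∀ j, (∑ l, ψ l * star (ψ l)) * φ j = φ j)
    (h1' : ∀ m, (∑ l, ψ l * star (ψ l)) * ψ m = ψ m)
    (h2 : ∀ l, (∑ j, φ j * star (φ j)) * ψ l = ψ l)
    (h2' : ∀ i, (∑ j, φ j * star (φ j)) * φ i = φ i) :
    ∑ l, ∑ m, ψ m * ψ l * star (ψ m) * star (ψ l)
      = ∑ i, ∑ j, φ j * φ i * star (φ j) * star (φ i) := by
  have hc1 : ∀ j l, star (φ j) * ψ l ∈ Set.center A := by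
    intro j l
    have h := Semigroup.mem_center_iff.mp (hcenψφ l j)
    rw [Semigroup.mem_center_iff]
    intro g
    calc g * (star (φ j) * ψ l)
        = star (star (ψ l) * φ j * star g) := by simp [star_mul, mul_assoc]
      _ = star (star g * (star (ψ l) * φ j)) := by rw [h]
      _ = star (φ j) * ψ l * g := by simp [star_mul, mul_assoc]
  have key1 := key_lemma ψ φ hc1 h1 h2
  have key2 := key_lemma φ ψ (fun j l => hcenψφ j l) h2 h1
  have hself : star (∑ l, ∑ m, ψ m * ψ l * star (ψ m) * star (ψ l))
      = ∑ l, ∑ m, ψ m * ψ l * star (ψ m) * star (ψ l) := by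
    calc star (∑ l, ∑ m, ψ m * ψ l * star (ψ m) * star (ψ l))
        = ∑ l, ∑ m, ψ l * ψ m * star (ψ l) * star (ψ m) := by
          simp [star_sum, star_mul, mul_assoc]
      _ = ∑ l, ∑ m, ψ m * ψ l * star (ψ m) * star (ψ l) := Finset.sum_comm
  have hMself : star (∑ m, ∑ j, ψ m * φ j * star (ψ m) * star (φ j))
      = ∑ m, ∑ j, ψ m * φ j * star (ψ m) * star (φ j) := by
    rw [← key1]; exact hself
  have hstarM : star (∑ m, ∑ j, ψ m * φ j * star (ψ m) * star (φ j))
      = ∑ m : Fin n, ∑ j : Fin k, φ j * ψ m * star (φ j) * star (ψ m) := by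
    simp [star_sum, star_mul, mul_assoc]
  calc ∑ l, ∑ m, ψ m * ψ l * star (ψ m) * star (ψ l)
      = ∑ m, ∑ j, ψ m * φ j * star (ψ m) * star (φ j) := key1
    _ = star (∑ m, ∑ j, ψ m * φ j * star (ψ m) * star (φ j)) := hMself.symm
    _ = ∑ m : Fin n, ∑ j : Fin k, φ j * ψ m * star (φ j) * star (ψ m) := hstarM
    _ = ∑ j : Fin k, ∑ m : Fin n, φ j * ψ m * star (φ j) * star (ψ m) := Finset.sum_comm
    _ = ∑ i, ∑ j, φ j * φ i * star (φ j) * star (φ i) := key2.symm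
end

section
/- Let A be a unital C*-algebra with center Z(A), and let ψ_1, …, ψ_n ∈ A satisfy ψ_l* ψ_m ∈ Z(A) for all l, m and Σ_{l=1}^n ψ_l ψ_l* = 1. Set θ := Σ_{l,m=1}^n ψ_m ψ_l ψ_m* ψ_l* and σ(a) := Σ_{l=1}^n ψ_l a ψ_l*. Then: (i) θ* = θ; (ii) θ² = 1; (iii) θ ψ_k = σ(ψ_k) for every k; (iv) θ ψ_k ψ_l = ψ_l ψ_k for all k, l. -/
/-- Let `A` be a unital C*-algebra, `ψ_1, …, ψ_n ∈ A` with
`ψ_l* ψ_m ∈ Z(A)` and `Σ_l ψ_l ψ_l* = 1`.  Set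
`θ := Σ_{l,m} ψ_m ψ_l ψ_m* ψ_l*` and `σ(a) := Σ_l ψ_l a ψ_l*`.  Then
`θ* = θ`, `θ² = 1`, `θ ψ_k = σ(ψ_k)` and `θ ψ_k ψ_l = ψ_l ψ_k`. -/
theorem symmetry_properties
    {A : Type*} [NormedRing A] [StarRing A] [CStarRing A]
    [NormedAlgebra ℂ A] [StarModule ℂ A] [CompleteSpace A]
    {n : ℕ} (ψ : Fin n → A)
    (hcen : ∀ l m, star (ψ l) * ψ m ∈ Set.center A)
    (hsum : ∑ l, ψ l * star (ψ l) = 1) :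
    star (∑ l, ∑ m, ψ m * ψ l * star (ψ m) * star (ψ l))
        = ∑ l, ∑ m, ψ m * ψ l * star (ψ m) * star (ψ l) ∧
    (∑ l, ∑ m, ψ m * ψ l * star (ψ m) * star (ψ l))
        * (∑ l, ∑ m, ψ m * ψ l * star (ψ m) * star (ψ l)) = 1 ∧
    (∀ k, (∑ l, ∑ m, ψ m * ψ l * star (ψ m) * star (ψ l)) * ψ k
        = ∑ l, ψ l * ψ k * star (ψ l)) ∧
    (∀ k l', (∑ l, ∑ m, ψ m * ψ l * star (ψ m) * star (ψ l)) * (ψ k * ψ l')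
        = ψ l' * ψ k) := by

  have hz : ∀ l m (a : A), a * (star (ψ l) * ψ m) = star (ψ l) * ψ m * a :=
    fun l m a => ((Set.mem_center_iff.mp (hcen l m)).comm a).symm
  -- (iii)
  have key : ∀ k, (∑ l, ∑ m, ψ m * ψ l * star (ψ m) * star (ψ l)) * ψ k
      = ∑ m, ψ m * ψ k * star (ψ m) := by
    intro k
    rw [Finset.sum_comm, Finset.sum_mul]
    refine Finset.sum_congr rfl fun m _ => ?_
    rw [Finset.sum_mul]
    have step : ∀ l : Fin n, ψ m * ψ l * star (ψ m) * star (ψ l) * ψ k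
        = ψ m * (ψ l * star (ψ l) * (ψ k * star (ψ m))) := by
      intro l
      calc ψ m * ψ l * star (ψ m) * star (ψ l) * ψ k
          = ψ m * (ψ l * (star (ψ m) * (star (ψ l) * ψ k))) := by
            simp only [mul_assoc]
        _ = ψ m * (ψ l * (star (ψ l) * ψ k * star (ψ m))) := by
            rw [hz l k (star (ψ m))]
        _ = ψ m * (ψ l * star (ψ l) * (ψ k * star (ψ m))) := by
            simp only [mul_assoc]
    calc (∑ l, ψ m * ψ l * star (ψ m) * star (ψ l) * ψ k)
        = ∑ l, ψ m * (ψ l * star (ψ l) * (ψ k * star (ψ m))) :=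
          Finset.sum_congr rfl fun l _ => step l
      _ = ψ m * ((∑ l, ψ l * star (ψ l)) * (ψ k * star (ψ m))) := by
          rw [← Finset.mul_sum, ← Finset.sum_mul]
      _ = ψ m * ψ k * star (ψ m) := by rw [hsum, one_mul, mul_assoc]
  -- (iv)
  have key2 : ∀ k l', (∑ l, ∑ m, ψ m * ψ l * star (ψ m) * star (ψ l)) * (ψ k * ψ l')
      = ψ l' * ψ k := by
    intro k l'
    rw [← mul_assoc, key k, Finset.sum_mul]
    have step : ∀ m : Fin n, ψ m * ψ k * star (ψ m) * ψ l'
        = ψ m * star (ψ m) * (ψ l' * ψ k) := by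
      intro m
      calc ψ m * ψ k * star (ψ m) * ψ l'
          = ψ m * (ψ k * (star (ψ m) * ψ l')) := by simp only [mul_assoc]
        _ = ψ m * (star (ψ m) * ψ l' * ψ k) := by rw [hz m l' (ψ k)]
        _ = ψ m * star (ψ m) * (ψ l' * ψ k) := by simp only [mul_assoc]
    calc (∑ m, ψ m * ψ k * star (ψ m) * ψ l')
        = ∑ m, ψ m * star (ψ m) * (ψ l' * ψ k) :=
          Finset.sum_congr rfl fun m _ => step m
      _ = (∑ m, ψ m * star (ψ m)) * (ψ l' * ψ k) := by rw [Finset.sum_mul]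
      _ = ψ l' * ψ k := by rw [hsum, one_mul]
  refine ⟨?_, ?_, key, key2⟩
  · simp only [star_sum, star_mul, star_star]
    rw [Finset.sum_comm]
    simp only [mul_assoc]
  · rw [Finset.mul_sum]
    have step : ∀ l m : Fin n,
        (∑ l, ∑ m, ψ m * ψ l * star (ψ m) * star (ψ l))
          * (ψ m * ψ l * star (ψ m) * star (ψ l))
        = ψ l * (ψ m * star (ψ m) * star (ψ l)) := by
      intro l m
      calc (∑ l, ∑ m, ψ m * ψ l * star (ψ m) * star (ψ l))
            * (ψ m * ψ l * star (ψ m) * star (ψ l))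
          = (∑ l, ∑ m, ψ m * ψ l * star (ψ m) * star (ψ l))
            * (ψ m * ψ l) * (star (ψ m) * star (ψ l)) := by
              simp only [mul_assoc]
        _ = ψ l * ψ m * (star (ψ m) * star (ψ l)) := by rw [key2 m l]
        _ = ψ l * (ψ m * star (ψ m) * star (ψ l)) := by simp only [mul_assoc]
    calc (∑ l, (∑ l', ∑ m, ψ m * ψ l' * star (ψ m) * star (ψ l'))
            * ∑ m, ψ m * ψ l * star (ψ m) * star (ψ l))
        = ∑ l, ∑ m, (∑ l', ∑ m', ψ m' * ψ l' * star (ψ m') * star (ψ l'))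
            * (ψ m * ψ l * star (ψ m) * star (ψ l)) := by
          refine Finset.sum_congr rfl fun l _ => ?_
          rw [Finset.mul_sum]
      _ = ∑ l, ∑ m, ψ l * (ψ m * star (ψ m) * star (ψ l)) :=
          Finset.sum_congr rfl fun l _ => Finset.sum_congr rfl fun m _ => step l m
      _ = ∑ l, ψ l * ((∑ m, ψ m * star (ψ m)) * star (ψ l)) := by
          simp only [Finset.mul_sum, Finset.sum_mul]
      _ = 1 := by simp only [hsum, one_mul]
end

section
/- Let A be a unital C*-algebra with center Z(A), let ψ_1, …, ψ_n ∈ A satisfy ψ_l* ψ_m ∈ Z(A) for all l, m and Σ_{l=1}^n ψ_l ψ_l* = 1, and let u ∈ A be a unitary such that ψ_l* u ψ_m ∈ Z(A) for all l, m. Then Σ_{l,m=1}^n (u ψ_m)(u ψ_l)(u ψ_m)*(u ψ_l)* = Σ_{l,m=1}^n ψ_m ψ_l ψ_m* ψ_l*. (The symmetry θ is invariant under the canonical action of every unitary of the bimodule generated by ψ_1, …, ψ_n.) -/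
theorem cent4 {A : Type*} [Ring A] {z1 z2 z3 z4 x1 x2 x3 x4 : A}
    (h1 : z1 ∈ Set.center A) (h2 : z2 ∈ Set.center A)
    (h3 : z3 ∈ Set.center A) (h4 : z4 ∈ Set.center A) :
    (x1 * z1) * (x2 * z2) * (z3 * x3) * (z4 * x4)
      = (z1 * z3) * ((z2 * z4) * (x1 * (x2 * (x3 * x4)))) := by
  rw [Semigroup.mem_center_iff] at h1 h2 h3 h4
  have m1 : ∀ x y : A, x * (z1 * y) = z1 * (x * y) := by
    intro x y; rw [← mul_assoc, h1, mul_assoc]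
  have m2 : ∀ x y : A, x * (z2 * y) = z2 * (x * y) := by
    intro x y; rw [← mul_assoc, h2, mul_assoc]
  have m3 : ∀ x y : A, x * (z3 * y) = z3 * (x * y) := by
    intro x y; rw [← mul_assoc, h3, mul_assoc]
  have m4 : ∀ x y : A, x * (z4 * y) = z4 * (x * y) := by
    intro x y; rw [← mul_assoc, h4, mul_assoc]
  calc (x1 * z1) * (x2 * z2) * (z3 * x3) * (z4 * x4)
      = x1 * (z1 * (x2 * (z2 * (z3 * (x3 * (z4 * x4)))))) := by
        simp only [mul_assoc]
    _ = x1 * (z1 * (x2 * (z2 * (z3 * (z4 * (x3 * x4)))))) := by rw [m4 x3]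
    _ = x1 * (z1 * (z2 * (x2 * (z3 * (z4 * (x3 * x4)))))) := by rw [m2 x2]
    _ = x1 * (z1 * (z2 * (z3 * (x2 * (z4 * (x3 * x4)))))) := by rw [m3 x2]
    _ = x1 * (z1 * (z2 * (z3 * (z4 * (x2 * (x3 * x4)))))) := by rw [m4 x2]
    _ = z1 * (z2 * (z3 * (z4 * (x1 * (x2 * (x3 * x4)))))) := by
        rw [m1 x1, m2 x1, m3 x1, m4 x1]
    _ = z1 * (z3 * (z2 * (z4 * (x1 * (x2 * (x3 * x4)))))) := by rw [m2 z3]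
    _ = (z1 * z3) * ((z2 * z4) * (x1 * (x2 * (x3 * x4)))) := by
        simp only [mul_assoc]

theorem core {A : Type*} [Ring A] [StarRing A] {n : ℕ} (ψ χ : Fin n → A)
    (e : Fin n → Fin n → A)
    (hecen : ∀ k l, e k l ∈ Set.center A)
    (hexp : ∀ l, χ l = ∑ k, ψ k * e k l)
    (hB : ∀ a p, ∑ m, e a m * star (e p m) = star (ψ a) * ψ p) :
    ∑ l, ∑ m, χ m * χ l * star (χ m) * star (χ l)
      = ∑ q, ∑ p, ∑ b, ∑ a,
          (star (ψ a) * ψ p) *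
            ((star (ψ b) * ψ q) * (ψ a * (ψ b * (star (ψ p) * star (ψ q))))) := by
  have hstar : ∀ l, star (χ l) = ∑ k, star (e k l) * star (ψ k) := by
    intro l
    rw [hexp l, star_sum]
    exact Finset.sum_congr rfl fun k _ => by rw [star_mul]
  have claim1 : ∀ l m, χ m * χ l * star (χ m) * star (χ l)
      = ∑ q, ∑ p, ∑ b, ∑ a,
          (e a m * star (e p m)) *
            ((e b l * star (e q l)) * (ψ a * (ψ b * (star (ψ p) * star (ψ q))))) := by
    intro l m
    rw [hstar m, hstar l, hexp m, hexp l]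
    simp only [Finset.sum_mul, Finset.mul_sum]
    refine Finset.sum_congr rfl fun q _ => Finset.sum_congr rfl fun p _ =>
      Finset.sum_congr rfl fun b _ => Finset.sum_congr rfl fun a _ => ?_
    exact cent4 (hecen a m) (hecen b l) (Set.star_mem_center (hecen p m))
      (Set.star_mem_center (hecen q l))
  calc ∑ l, ∑ m, χ m * χ l * star (χ m) * star (χ l)
      = ∑ l, ∑ m, ∑ q, ∑ p, ∑ b, ∑ a,
          (e a m * star (e p m)) *
            ((e b l * star (e q l)) * (ψ a * (ψ b * (star (ψ p) * star (ψ q))))) := by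
        exact Finset.sum_congr rfl fun l _ => Finset.sum_congr rfl fun m _ => claim1 l m
    _ = ∑ l, ∑ q, ∑ m, ∑ p, ∑ b, ∑ a, _ :=
        Finset.sum_congr rfl fun l _ => Finset.sum_comm
    _ = ∑ q, ∑ l, ∑ m, ∑ p, ∑ b, ∑ a, _ := Finset.sum_comm
    _ = ∑ q, ∑ l, ∑ p, ∑ m, ∑ b, ∑ a, _ :=
        Finset.sum_congr rfl fun q _ => Finset.sum_congr rfl fun l _ => Finset.sum_comm
    _ = ∑ q, ∑ p, ∑ l, ∑ m, ∑ b, ∑ a, _ :=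
        Finset.sum_congr rfl fun q _ => Finset.sum_comm
    _ = ∑ q, ∑ p, ∑ l, ∑ b, ∑ m, ∑ a, _ :=
        Finset.sum_congr rfl fun q _ => Finset.sum_congr rfl fun p _ =>
          Finset.sum_congr rfl fun l _ => Finset.sum_comm
    _ = ∑ q, ∑ p, ∑ b, ∑ l, ∑ m, ∑ a, _ :=
        Finset.sum_congr rfl fun q _ => Finset.sum_congr rfl fun p _ => Finset.sum_comm
    _ = ∑ q, ∑ p, ∑ b, ∑ l, ∑ a, ∑ m, _ :=
        Finset.sum_congr rfl fun q _ => Finset.sum_congr rfl fun p _ =>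
          Finset.sum_congr rfl fun b _ => Finset.sum_congr rfl fun l _ => Finset.sum_comm
    _ = ∑ q, ∑ p, ∑ b, ∑ a, ∑ l, ∑ m,
          (e a m * star (e p m)) *
            ((e b l * star (e q l)) * (ψ a * (ψ b * (star (ψ p) * star (ψ q))))) :=
        Finset.sum_congr rfl fun q _ => Finset.sum_congr rfl fun p _ =>
          Finset.sum_congr rfl fun b _ => Finset.sum_comm
    _ = ∑ q, ∑ p, ∑ b, ∑ a,
          (star (ψ a) * ψ p) *
            ((star (ψ b) * ψ q) * (ψ a * (ψ b * (star (ψ p) * star (ψ q))))) := by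
        refine Finset.sum_congr rfl fun q _ => Finset.sum_congr rfl fun p _ =>
          Finset.sum_congr rfl fun b _ => Finset.sum_congr rfl fun a _ => ?_
        calc ∑ l, ∑ m, (e a m * star (e p m)) *
              ((e b l * star (e q l)) * (ψ a * (ψ b * (star (ψ p) * star (ψ q)))))
            = ∑ l, (∑ m, e a m * star (e p m)) *
              ((e b l * star (e q l)) * (ψ a * (ψ b * (star (ψ p) * star (ψ q))))) :=
              Finset.sum_congr rfl fun l _ => (Finset.sum_mul _ _ _).symm
          _ = ∑ l, (star (ψ a) * ψ p) *
              ((e b l * star (e q l)) * (ψ a * (ψ b * (star (ψ p) * star (ψ q))))) := by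
              rw [hB a p]
          _ = (star (ψ a) * ψ p) * ∑ l,
              ((e b l * star (e q l)) * (ψ a * (ψ b * (star (ψ p) * star (ψ q))))) :=
              (Finset.mul_sum _ _ _).symm
          _ = (star (ψ a) * ψ p) * ((∑ l, e b l * star (e q l)) *
              (ψ a * (ψ b * (star (ψ p) * star (ψ q))))) := by
              rw [Finset.sum_mul]
          _ = (star (ψ a) * ψ p) *
              ((star (ψ b) * ψ q) * (ψ a * (ψ b * (star (ψ p) * star (ψ q))))) := by
              rw [hB b q]


/-- The symmetry `θ = Σ_{l,m} ψ_m ψ_l ψ_m* ψ_l*` is invariant under the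
canonical action of every unitary `u` of the bimodule generated by `ψ_1, …, ψ_n`:
`Σ_{l,m} (uψ_m)(uψ_l)(uψ_m)*(uψ_l)* = Σ_{l,m} ψ_m ψ_l ψ_m* ψ_l*`. -/
theorem symmetry_unitarily_invariant
    {A : Type*} [NormedRing A] [StarRing A] [CStarRing A]
    [NormedAlgebra ℂ A] [StarModule ℂ A] [CompleteSpace A]
    {n : ℕ} (ψ : Fin n → A)
    (hcen : ∀ l m, star (ψ l) * ψ m ∈ Set.center A)
    (hsum : ∑ l, ψ l * star (ψ l) = 1)
    (u : A) (hu1 : star u * u = 1) (hu2 : u * star u = 1)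
    (hucen : ∀ l m, star (ψ l) * (u * ψ m) ∈ Set.center A) :
    ∑ l, ∑ m, (u * ψ m) * (u * ψ l) * star (u * ψ m) * star (u * ψ l)
      = ∑ l, ∑ m, ψ m * ψ l * star (ψ m) * star (ψ l) := by
  have hexp1 : ∀ l, u * ψ l = ∑ k, ψ k * (star (ψ k) * (u * ψ l)) := by
    intro l
    calc u * ψ l = 1 * (u * ψ l) := (one_mul _).symm
      _ = (∑ k, ψ k * star (ψ k)) * (u * ψ l) := by rw [hsum]
      _ = ∑ k, ψ k * (star (ψ k) * (u * ψ l)) := by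
          rw [Finset.sum_mul]; simp only [mul_assoc]
  have hexp2 : ∀ l, ψ l = ∑ k, ψ k * (star (ψ k) * ψ l) := by
    intro l
    calc ψ l = 1 * ψ l := (one_mul _).symm
      _ = (∑ k, ψ k * star (ψ k)) * ψ l := by rw [hsum]
      _ = ∑ k, ψ k * (star (ψ k) * ψ l) := by
          rw [Finset.sum_mul]; simp only [mul_assoc]
  have hB1 : ∀ a p, ∑ m, (star (ψ a) * (u * ψ m)) * star (star (ψ p) * (u * ψ m))
      = star (ψ a) * ψ p := by
    intro a p
    have h1 : ∀ m, (star (ψ a) * (u * ψ m)) * star (star (ψ p) * (u * ψ m))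
        = star (ψ a) * (u * (ψ m * (star (ψ m) * (star u * ψ p)))) := by
      intro m; simp only [star_mul, star_star, mul_assoc]
    calc ∑ m, (star (ψ a) * (u * ψ m)) * star (star (ψ p) * (u * ψ m))
        = ∑ m, star (ψ a) * (u * ((ψ m * star (ψ m)) * (star u * ψ p))) := by
          refine Finset.sum_congr rfl fun m _ => ?_
          rw [h1 m]; simp only [mul_assoc]
      _ = star (ψ a) * (u * ((∑ m, ψ m * star (ψ m)) * (star u * ψ p))) := by
          rw [← Finset.mul_sum, ← Finset.mul_sum, ← Finset.sum_mul]
      _ = star (ψ a) * ψ p := by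
          rw [hsum, one_mul, ← mul_assoc u (star u) (ψ p), hu2, one_mul]
  have hB2 : ∀ a p, ∑ m, (star (ψ a) * ψ m) * star (star (ψ p) * ψ m)
      = star (ψ a) * ψ p := by
    intro a p
    calc ∑ m, (star (ψ a) * ψ m) * star (star (ψ p) * ψ m)
        = ∑ m, star (ψ a) * ((ψ m * star (ψ m)) * ψ p) := by
          refine Finset.sum_congr rfl fun m _ => ?_
          simp only [star_mul, star_star, mul_assoc]
      _ = star (ψ a) * ((∑ m, ψ m * star (ψ m)) * ψ p) := by
          rw [← Finset.mul_sum, ← Finset.sum_mul]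
      _ = star (ψ a) * ψ p := by rw [hsum, one_mul]
  rw [core ψ (fun l => u * ψ l) (fun k l => star (ψ k) * (u * ψ l)) hucen hexp1 hB1,
    core ψ ψ (fun k l => star (ψ k) * ψ l) hcen hexp2 hB2]
end

section
/- Let A be a unital C*-algebra with a Cuntz family ψ_1, …, ψ_d and canonical endomorphism σ. For r ∈ ℕ define θ(r,1) := Σ_{k=1}^d Σ_{N ∈ {1,…,d}^r} ψ_k ψ_N ψ_k* ψ_N*. Then for all r, s ∈ ℕ and all multi-indices M ∈ {1,…,d}^s, L ∈ {1,…,d}^r, one has θ(s,1) · ψ_M ψ_L* = σ(ψ_M ψ_L*) · θ(r,1). -/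
/-- The ordered product `ψ_L := ψ_{l_1} ⋯ ψ_{l_r}` associated with a multi-index
`L : Fin r → Fin d` (for `r = 0` it is `1`). -/
def psiWord {A : Type*} [Monoid A] {d r : ℕ} (ψ : Fin d → A) (L : Fin r → Fin d) : A :=
  (List.ofFn fun i => ψ (L i)).prod

/-- The flip operator `θ(r,1) := Σ_k Σ_{N ∈ {1,…,d}^r} ψ_k ψ_N ψ_k* ψ_N*`. -/
def thetaR1 {A : Type*} [Ring A] [StarRing A] {d : ℕ} (ψ : Fin d → A) (r : ℕ) : A :=
  ∑ k : Fin d, ∑ N : Fin r → Fin d,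
    ψ k * psiWord ψ N * star (ψ k) * star (psiWord ψ N)

/-- The canonical endomorphism `σ(t) := Σ_k ψ_k t ψ_k*` of a Cuntz family. -/
def cuntzEndo {A : Type*} [Ring A] [StarRing A] {d : ℕ} (ψ : Fin d → A) (t : A) : A :=
  ∑ k : Fin d, ψ k * t * star (ψ k)

lemma psiWord_succ {A : Type*} [Monoid A] {d r : ℕ} (ψ : Fin d → A)
    (N : Fin (r + 1) → Fin d) :
    psiWord ψ N = ψ (N 0) * psiWord ψ (fun i => N i.succ) := by
  simp [psiWord, List.ofFn_succ]

lemma word_orth {A : Type*} [Ring A] [StarRing A] {d : ℕ} (ψ : Fin d → A)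
    (horth : ∀ i j, star (ψ i) * ψ j = if i = j then 1 else 0) :
    ∀ {s : ℕ} (N M : Fin s → Fin d),
      star (psiWord ψ N) * psiWord ψ M = if N = M then 1 else 0 := by
  intro s
  induction s with
  | zero =>
      intro N M
      simp [psiWord, Subsingleton.elim N M]
  | succ n ih =>
      intro N M
      rw [psiWord_succ, psiWord_succ, star_mul]
      have key : star (psiWord ψ fun i => N i.succ) * star (ψ (N 0)) *
          (ψ (M 0) * psiWord ψ fun i => M i.succ)
          = star (psiWord ψ fun i => N i.succ) * (star (ψ (N 0)) * ψ (M 0)) *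
            psiWord ψ fun i => M i.succ := by simp only [mul_assoc]
      rw [key, horth]
      by_cases h0 : N 0 = M 0
      · rw [if_pos h0, mul_one, ih]
        by_cases ht : (fun i : Fin n => N i.succ) = (fun i : Fin n => M i.succ)
        · rw [if_pos ht, if_pos]
          funext i
          induction i using Fin.cases with
          | zero => exact h0
          | succ j => exact congrFun ht j
        · rw [if_neg ht, if_neg]
          intro h; apply ht; funext j; exact congrFun h j.succ
      · rw [if_neg h0, mul_zero, zero_mul, if_neg]
        intro h; exact h0 (congrFun h 0)

/-- For a Cuntz family `ψ_1, …, ψ_d` in a unital C*-algebra, with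
canonical endomorphism `σ`, one has
`θ(s,1) ⬝ ψ_M ψ_L* = σ(ψ_M ψ_L*) ⬝ θ(r,1)` for all multi-indices `M ∈ {1,…,d}^s`
and `L ∈ {1,…,d}^r`. -/
theorem theta_intertwines_canonical_endo
    {A : Type*} [NormedRing A] [StarRing A] [CStarRing A]
    [NormedAlgebra ℂ A] [StarModule ℂ A] [CompleteSpace A]
    {d : ℕ} (hd : 0 < d) (ψ : Fin d → A)
    (horth : ∀ i j, star (ψ i) * ψ j = if i = j then 1 else 0)
    (hsum : ∑ k, ψ k * star (ψ k) = 1)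
    {r s : ℕ} (M : Fin s → Fin d) (L : Fin r → Fin d) :
    thetaR1 ψ s * (psiWord ψ M * star (psiWord ψ L))
      = cuntzEndo ψ (psiWord ψ M * star (psiWord ψ L)) * thetaR1 ψ r := by
  have lhs_eq : thetaR1 ψ s * (psiWord ψ M * star (psiWord ψ L))
      = ∑ k : Fin d, ψ k * psiWord ψ M * star (ψ k) * star (psiWord ψ L) := by
    rw [thetaR1, Finset.sum_mul]
    refine Finset.sum_congr rfl fun k _ => ?_
    rw [Finset.sum_mul]
    have : ∀ N : Fin s → Fin d,
        ψ k * psiWord ψ N * star (ψ k) * star (psiWord ψ N) *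
          (psiWord ψ M * star (psiWord ψ L))
        = if N = M then ψ k * psiWord ψ M * star (ψ k) * star (psiWord ψ L) else 0 := by
      intro N
      have : ψ k * psiWord ψ N * star (ψ k) * star (psiWord ψ N) *
          (psiWord ψ M * star (psiWord ψ L))
          = ψ k * psiWord ψ N * star (ψ k) * (star (psiWord ψ N) * psiWord ψ M) *
            star (psiWord ψ L) := by simp only [mul_assoc]
      rw [this, word_orth ψ horth]
      by_cases h : N = M
      · rw [if_pos h, if_pos h, h, mul_one]
      · rw [if_neg h, if_neg h, mul_zero, zero_mul]
    simp only [this]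
    simp
  have rhs_eq : cuntzEndo ψ (psiWord ψ M * star (psiWord ψ L)) * thetaR1 ψ r
      = ∑ k : Fin d, ψ k * psiWord ψ M * star (ψ k) * star (psiWord ψ L) := by
    rw [cuntzEndo, thetaR1, Finset.sum_mul]
    refine Finset.sum_congr rfl fun k _ => ?_
    rw [Finset.mul_sum]
    have outer : ∀ k' : Fin d,
        ψ k * (psiWord ψ M * star (psiWord ψ L)) * star (ψ k) *
          ∑ N : Fin r → Fin d, ψ k' * psiWord ψ N * star (ψ k') * star (psiWord ψ N)
        = if k' = k then ψ k * psiWord ψ M * star (ψ k) * star (psiWord ψ L) else 0 := by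
      intro k'
      rw [Finset.mul_sum]
      have inner : ∀ N : Fin r → Fin d,
          ψ k * (psiWord ψ M * star (psiWord ψ L)) * star (ψ k) *
            (ψ k' * psiWord ψ N * star (ψ k') * star (psiWord ψ N))
          = if k = k' then
              (if L = N then ψ k * psiWord ψ M * star (ψ k') * star (psiWord ψ N) else 0)
            else 0 := by
        intro N
        have : ψ k * (psiWord ψ M * star (psiWord ψ L)) * star (ψ k) *
            (ψ k' * psiWord ψ N * star (ψ k') * star (psiWord ψ N))
            = ψ k * psiWord ψ M * ((star (psiWord ψ L)) * ((star (ψ k) * ψ k') *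
              psiWord ψ N)) * (star (ψ k') * star (psiWord ψ N)) := by simp only [mul_assoc]
        rw [this, horth]
        by_cases hk : k = k'
        · rw [if_pos hk, if_pos hk, one_mul]
          have hL : star (psiWord ψ L) * psiWord ψ N = if L = N then 1 else 0 := word_orth ψ horth L N
          rw [hL]
          by_cases hLN : L = N
          · rw [if_pos hLN, if_pos hLN, mul_one]
            simp only [mul_assoc]
          · rw [if_neg hLN, if_neg hLN, mul_zero, zero_mul]
        · simp [if_neg hk]
      simp only [inner]
      by_cases hk : k = k'
      · subst hk
        simp [Finset.sum_ite_eq]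
      · simp [hk, Ne.symm hk]
    simp only [outer]
    simp
  rw [lhs_eq, rhs_eq]
end

section
/- Let A be a unital C*-algebra with a Cuntz family ψ_1, …, ψ_d and canonical endomorphism σ. For a permutation p of {1,…,r} define θ(p) := Σ_{L ∈ {1,…,d}^r} ψ_{L∘p} ψ_L*, and let 𝕊p be the permutation of {1,…,r+1} with (𝕊p)(1) = 1 and (𝕊p)(i+1) = p(i)+1 for 1 ≤ i ≤ r. Then σ(θ(p)) = θ(𝕊p). -/
/-- The permutation operator `θ(p) := Σ_{L ∈ {1,…,d}^r} ψ_{L∘p} ψ_L*`. -/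
def thetaPerm {A : Type*} [Ring A] [StarRing A] {d r : ℕ}
    (ψ : Fin d → A) (p : Equiv.Perm (Fin r)) : A :=
  ∑ L : Fin r → Fin d, psiWord ψ (fun i => L (p i)) * star (psiWord ψ L)

lemma psiWord_cons {A : Type*} [Monoid A] {d r : ℕ} (ψ : Fin d → A)
    (k : Fin d) (L : Fin r → Fin d) :
    psiWord ψ (Fin.cons k L) = ψ k * psiWord ψ L := by
  simp [psiWord, List.ofFn_succ]

/-- For a Cuntz family, `σ(θ(p)) = θ(𝕊p)` where `𝕊p` is the shifted
permutation of `{0,…,r}` fixing `0` and sending `i+1` to `p(i)+1`. -/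
theorem cuntzEndo_thetaPerm
    {A : Type*} [NormedRing A] [StarRing A] [CStarRing A]
    [NormedAlgebra ℂ A] [StarModule ℂ A] [CompleteSpace A]
    {d : ℕ} (hd : 0 < d) (ψ : Fin d → A)
    (horth : ∀ i j, star (ψ i) * ψ j = if i = j then 1 else 0)
    (hsum : ∑ k, ψ k * star (ψ k) = 1)
    {r : ℕ} (p : Equiv.Perm (Fin r)) (Sp : Equiv.Perm (Fin (r + 1)))
    (hSp0 : Sp 0 = 0) (hSp : ∀ i : Fin r, Sp i.succ = (p i).succ) :
    cuntzEndo ψ (thetaPerm ψ p) = thetaPerm ψ Sp := by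
  classical
  set e : (Fin d × (Fin r → Fin d)) ≃ (Fin (r + 1) → Fin d) :=
    Fin.consEquiv fun _ => Fin d with he
  rw [show thetaPerm ψ Sp = ∑ M : Fin (r+1) → Fin d,
      psiWord ψ (fun i => M (Sp i)) * star (psiWord ψ M) from rfl,
    ← e.sum_comp, Fintype.sum_prod_type, cuntzEndo, thetaPerm]
  refine Finset.sum_congr rfl fun k _ => ?_
  rw [Finset.mul_sum, Finset.sum_mul]
  refine Finset.sum_congr rfl fun L _ => ?_
  have h1 : (fun i => (e (k, L)) (Sp i)) = Fin.cons k (fun i => L (p i)) := by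
    funext i
    refine Fin.cases ?_ ?_ i
    · simp [hSp0, he, Fin.consEquiv]
    · intro j
      simp [hSp j, he, Fin.consEquiv]
  show ψ k * (psiWord ψ (fun i => L (p i)) * star (psiWord ψ L)) * star (ψ k)
      = psiWord ψ (fun i => (e (k, L)) (Sp i)) * star (psiWord ψ (e (k, L)))
  have h2 : e (k, L) = Fin.cons k L := rfl
  rw [h1, h2, psiWord_cons, psiWord_cons, star_mul]
  noncomm_ring
end

section
/- Let A be a unital C*-algebra, d a positive integer, and ψ_1, …, ψ_d ∈ A with ψ_i* ψ_j = δ_{ij}·1 for all i, j. Let S := Σ_{p ∈ S_d} sign(p) ψ_{p(1)} ψ_{p(2)} ⋯ ψ_{p(d)}. Then S* S = d!·1; in particular (d!)^{-1/2} S is an isometry. -/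
/-- If `ψ_1, …, ψ_d` are elements of a unital C*-algebra with
`ψ_i* ψ_j = δ_{ij} 1`, and `S := Σ_{p ∈ S_d} sign(p) ψ_{p(1)} ⋯ ψ_{p(d)}`, then
`S* S = d! ⬝ 1`; in particular `(d!)^{-1/2} S` is an isometry. -/
theorem antisymmetric_norm
    {A : Type*} [NormedRing A] [StarRing A] [CStarRing A]
    [NormedAlgebra ℂ A] [StarModule ℂ A] [CompleteSpace A]
    {d : ℕ} (hd : 0 < d) (ψ : Fin d → A)
    (horth : ∀ i j, star (ψ i) * ψ j = if i = j then 1 else 0) :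
    star (∑ p : Equiv.Perm (Fin d), (Equiv.Perm.sign p : ℤ) •
          (List.ofFn fun i => ψ (p i)).prod)
        * (∑ p : Equiv.Perm (Fin d), (Equiv.Perm.sign p : ℤ) •
          (List.ofFn fun i => ψ (p i)).prod)
      = (d.factorial : ℂ) • 1 ∧
    star ((((Real.sqrt (d.factorial) : ℝ) : ℂ))⁻¹ •
          ∑ p : Equiv.Perm (Fin d), (Equiv.Perm.sign p : ℤ) •
          (List.ofFn fun i => ψ (p i)).prod)
        * ((((Real.sqrt (d.factorial) : ℝ) : ℂ))⁻¹ •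
          ∑ p : Equiv.Perm (Fin d), (Equiv.Perm.sign p : ℤ) •
          (List.ofFn fun i => ψ (p i)).prod)
      = 1 := by
  have key : ∀ (n : ℕ) (p q : Fin n → Fin d),
      star ((List.ofFn fun i => ψ (p i)).prod) * (List.ofFn fun i => ψ (q i)).prod
        = if p = q then 1 else 0 := by
    intro n
    induction n with
    | zero => intro p q; simp [Subsingleton.elim p q]
    | succ n ih =>
      intro p q
      rw [List.ofFn_succ, List.ofFn_succ, List.prod_cons, List.prod_cons, star_mul]
      by_cases h0 : p 0 = q 0
      · have hmid : star (ψ (p 0)) * (ψ (q 0) * (List.ofFn fun i => ψ (q i.succ)).prod)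
            = (List.ofFn fun i => ψ (q i.succ)).prod := by
          rw [← mul_assoc, horth, if_pos h0, one_mul]
        rw [mul_assoc, hmid, ih]
        have hiff : ((fun i : Fin n => p i.succ) = fun i : Fin n => q i.succ) ↔ p = q := by
          constructor
          · intro h
            funext i
            exact Fin.cases h0 (fun j => congrFun h j) i
          · intro h; rw [h]
        rw [if_congr hiff rfl rfl]
      · rw [mul_assoc, ← mul_assoc (star (ψ (p 0))), horth, if_neg h0, zero_mul, mul_zero, if_neg (fun h => h0 (by rw [h]))]
  have hterm : ∀ p q : Equiv.Perm (Fin d),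
      star ((Equiv.Perm.sign p : ℤ) • (List.ofFn fun i => ψ (p i)).prod)
        * ((Equiv.Perm.sign q : ℤ) • (List.ofFn fun i => ψ (q i)).prod)
        = if p = q then 1 else 0 := by
    intro p q
    rw [star_zsmul, smul_mul_smul_comm, key]
    by_cases h : p = q
    · subst h
      rw [if_pos rfl, if_pos rfl, ← Units.val_mul, ← sq, Int.units_sq, Units.val_one, one_smul]
    · rw [if_neg (fun hc => h (Equiv.coe_fn_injective hc)), if_neg h, smul_zero]
  have hS : star (∑ p : Equiv.Perm (Fin d), (Equiv.Perm.sign p : ℤ) •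
          (List.ofFn fun i => ψ (p i)).prod)
        * (∑ p : Equiv.Perm (Fin d), (Equiv.Perm.sign p : ℤ) •
          (List.ofFn fun i => ψ (p i)).prod)
      = (d.factorial : ℂ) • 1 := by
    rw [star_sum, Finset.sum_mul_sum]
    simp only [hterm]
    simp [Finset.sum_ite_eq, Fintype.card_perm, Nat.cast_smul_eq_nsmul]
  refine ⟨hS, ?_⟩
  rw [star_smul, smul_mul_smul_comm, hS, smul_smul]
  have hfac : (0 : ℝ) < d.factorial := by exact_mod_cast d.factorial_pos
  have : star (((Real.sqrt d.factorial : ℝ) : ℂ))⁻¹ *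
      (((Real.sqrt d.factorial : ℝ) : ℂ))⁻¹ * (d.factorial : ℂ) = 1 := by
    rw [star_inv₀, Complex.star_def, Complex.conj_ofReal, ← mul_inv, ← Complex.ofReal_mul,
      Real.mul_self_sqrt hfac.le]
    rw [← Complex.ofReal_natCast, ← Complex.ofReal_inv, ← Complex.ofReal_mul,
      inv_mul_cancel₀ hfac.ne']
    simp
  rw [this, one_smul]
end

section
/- Let A be a unital C*-algebra with a Cuntz family ψ_1, …, ψ_d, let S := Σ_{p ∈ S_d} sign(p) ψ_{p(1)} ⋯ ψ_{p(d)}, and for a permutation σ of {1,…,d} let θ(σ) := Σ_{L ∈ {1,…,d}^d} ψ_{L∘σ} ψ_L*. Then S S* = Σ_{σ ∈ S_d} sign(σ) θ(σ). (Equivalently, the support projection of the totally antisymmetric isometry (d!)^{-1/2}S equals (1/d!) Σ_σ sign(σ) θ(σ).) -/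
open Equiv Finset

section aux
variable {A : Type*} [Ring A] [StarRing A] [Module ℂ A] {d : ℕ} (ψ : Fin d → A)

/-- cancellation for non-injective multi-indices -/
lemma cancel_noninj (L : Fin d → Fin d) (hL : ¬ Function.Injective L) :
    ∑ σ : Equiv.Perm (Fin d), (Equiv.Perm.sign σ : ℤ) •
      ((List.ofFn fun i => ψ (L (σ i))).prod * star ((List.ofFn fun i => ψ (L i)).prod)) = 0 := by
  classical
  obtain ⟨i, j, hLij, hij⟩ := Function.not_injective_iff.mp hL
  set τ := Equiv.swap i j with hτ
  have hLτ : ∀ x, L (τ x) = L x := by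
    intro x
    rcases eq_or_ne x i with rfl | hxi
    · simp [hτ, hLij]
    rcases eq_or_ne x j with rfl | hxj
    · simp [hτ, hLij]
    · simp [hτ, Equiv.swap_apply_of_ne_of_ne hxi hxj]
  set f : Equiv.Perm (Fin d) → A := fun σ => (Equiv.Perm.sign σ : ℤ) •
      ((List.ofFn fun i => ψ (L (σ i))).prod * star ((List.ofFn fun i => ψ (L i)).prod)) with hf
  have key : ∑ σ, f σ = ∑ σ, f (τ * σ) :=
    (Fintype.sum_equiv (Equiv.mulLeft τ) _ _ (fun σ => rfl)).symm
  have hneg : ∀ σ, f (τ * σ) = - f σ := by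
    intro σ
    have hsign : (Equiv.Perm.sign (τ * σ) : ℤ) = - (Equiv.Perm.sign σ : ℤ) := by
      simp [hτ, Equiv.Perm.sign_mul, Equiv.Perm.sign_swap hij]
    simp only [hf, Equiv.Perm.mul_apply]
    simp only [hLτ]
    rw [hsign, neg_smul]
  have hSneg : ∑ σ, f σ = - ∑ σ, f σ := calc
    ∑ σ, f σ = ∑ σ, f (τ * σ) := key
    _ = ∑ σ, - f σ := Finset.sum_congr rfl fun σ _ => hneg σ
    _ = - ∑ σ, f σ := by rw [Finset.sum_neg_distrib]
  have h2' : (2 : ℂ) • (∑ σ, f σ) = 0 := by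
    rw [two_smul]; nth_rewrite 1 [hSneg]; abel
  have := smul_eq_zero.mp h2'
  exact this.resolve_left (by norm_num)

end aux

/-- For a Cuntz family `ψ_1, …, ψ_d` and
`S := Σ_{p ∈ S_d} sign(p) ψ_{p(1)} ⋯ ψ_{p(d)}`, one has
`S S* = Σ_{σ ∈ S_d} sign(σ) θ(σ)`. -/
theorem antisymmetric_support
    {A : Type*} [NormedRing A] [StarRing A] [CStarRing A]
    [NormedAlgebra ℂ A] [StarModule ℂ A] [CompleteSpace A]
    {d : ℕ} (hd : 0 < d) (ψ : Fin d → A)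
    (horth : ∀ i j, star (ψ i) * ψ j = if i = j then 1 else 0)
    (hsum : ∑ k, ψ k * star (ψ k) = 1) :
    (∑ p : Equiv.Perm (Fin d), (Equiv.Perm.sign p : ℤ) •
        (List.ofFn fun i => ψ (p i)).prod)
      * star (∑ p : Equiv.Perm (Fin d), (Equiv.Perm.sign p : ℤ) •
        (List.ofFn fun i => ψ (p i)).prod)
      = ∑ σ : Equiv.Perm (Fin d), (Equiv.Perm.sign σ : ℤ) • thetaPerm ψ σ := by
  classical
  set W : (Fin d → Fin d) → A := fun L => (List.ofFn fun i => ψ (L i)).prod with hW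
  -- expand LHS as a double sum over permutations
  have lhs_eq : (∑ p : Equiv.Perm (Fin d), (Equiv.Perm.sign p : ℤ) • W p)
      * star (∑ p : Equiv.Perm (Fin d), (Equiv.Perm.sign p : ℤ) • W p)
      = ∑ p : Equiv.Perm (Fin d), ∑ q : Equiv.Perm (Fin d),
          ((Equiv.Perm.sign p : ℤ) * (Equiv.Perm.sign q : ℤ)) • (W p * star (W q)) := by
    rw [star_sum, Finset.sum_mul_sum]
    refine Finset.sum_congr rfl fun p _ => Finset.sum_congr rfl fun q _ => ?_
    rw [star_zsmul, smul_mul_smul_comm]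
  -- expand RHS and exchange sums
  have rhs_eq : ∑ σ : Equiv.Perm (Fin d), (Equiv.Perm.sign σ : ℤ) • thetaPerm ψ σ
      = ∑ L : Fin d → Fin d, ∑ σ : Equiv.Perm (Fin d),
          (Equiv.Perm.sign σ : ℤ) • (W (fun i => L (σ i)) * star (W L)) := by
    rw [Finset.sum_comm]
    refine Finset.sum_congr rfl fun σ _ => ?_
    rw [thetaPerm, Finset.smul_sum]
    rfl
  rw [lhs_eq, rhs_eq]
  -- split the RHS into injective and non-injective multi-indices
  rw [← Finset.sum_filter_add_sum_filter_not Finset.univ (fun L => Function.Injective L)]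
  have hzero : ∑ L ∈ Finset.univ.filter (fun L : Fin d → Fin d => ¬ Function.Injective L),
      ∑ σ : Equiv.Perm (Fin d),
        (Equiv.Perm.sign σ : ℤ) • (W (fun i => L (σ i)) * star (W L)) = 0 := by
    refine Finset.sum_eq_zero fun L hL => ?_
    exact cancel_noninj ψ L (Finset.mem_filter.mp hL).2
  rw [hzero, add_zero]
  -- the injective part: reindex by permutations
  rw [show (∑ L ∈ Finset.univ.filter (fun L : Fin d → Fin d => Function.Injective L),
      ∑ σ : Equiv.Perm (Fin d),
        (Equiv.Perm.sign σ : ℤ) • (W (fun i => L (σ i)) * star (W L)))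
      = ∑ q : Equiv.Perm (Fin d), ∑ σ : Equiv.Perm (Fin d),
        (Equiv.Perm.sign σ : ℤ) • (W (fun i => q (σ i)) * star (W q)) from by
    refine (Finset.sum_bij (fun (q : Equiv.Perm (Fin d)) _ => (q : Fin d → Fin d))
      ?_ ?_ ?_ ?_).symm
    · intro q _
      exact Finset.mem_filter.mpr ⟨Finset.mem_univ _, q.injective⟩
    · intro q1 _ q2 _ h
      exact Equiv.coe_fn_injective h
    · intro L hL
      have hinj : Function.Injective L := (Finset.mem_filter.mp hL).2
      exact ⟨Equiv.ofBijective L (Finite.injective_iff_bijective.mp hinj),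
        Finset.mem_univ _, rfl⟩
    · intro q _
      rfl]
  -- finish: reindex the inner sum σ ↦ q⁻¹ * p and compare with the LHS
  rw [Finset.sum_comm]
  refine Finset.sum_congr rfl fun q _ => ?_
  refine Fintype.sum_equiv (Equiv.mulLeft q⁻¹) _ _ fun p => ?_
  have h1 : (fun i => q ((q⁻¹ * p) i)) = fun i => p i := by
    funext i
    simp [Equiv.Perm.mul_apply]
  have h2 : (Equiv.Perm.sign (q⁻¹ * p) : ℤ) = (Equiv.Perm.sign p : ℤ) * (Equiv.Perm.sign q : ℤ) := by
    rw [Equiv.Perm.sign_mul, Equiv.Perm.sign_inv]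
    push_cast
    ring
  simp only [Equiv.coe_mulLeft, h1, h2]
end

section
/- Let A be a unital C*-algebra with a Cuntz family ψ_1, …, ψ_d (d ≥ 1) and canonical endomorphism σ(t) := Σ_{k=1}^d ψ_k t ψ_k*, and let S := Σ_{p ∈ S_d} sign(p) ψ_{p(1)} ⋯ ψ_{p(d)}. Then S* σ(S) = (−1)^{d−1} (d−1)! · 1. (Equivalently, the totally antisymmetric isometry R := (d!)^{-1/2} S satisfies the special conjugate equation R* σ(R) = (−1)^{d−1} d^{−1} · 1.) -/
/-!
Expand `S* ψ_k S` over pairs of permutations `(q, p)`. By the Cuntz relations, the adjoint of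
`ψ_{q 0} ⋯ ψ_{q (d-1)}` contracts `ψ_k ψ_{p 0} ⋯ ψ_{p (d-1)}` to `ψ_{p (d-1)}` when
`q = (k, p 0, …, p (d-2))`, and to `0` otherwise. That is, `q 0 = k` and `p` is `q` composed with
the cyclic rotation. Each of the `(d-1)!` such `q` contributes the sign of a `d`-cycle,
`(-1)^(d-1)`, so `S* ψ_k S = (-1)^(d-1) (d-1)! ψ_k`. Multiplying on the right by `ψ_k*` and
summing over `k` with `Σ ψ_k ψ_k* = 1` gives the claim.
-/

open Finset Equiv Nat

theorem star_prod_map_mul_prod_map_mul {A ι : Type*} [MonoidWithZero A] [StarMul A]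
    [DecidableEq ι] {ψ : ι → A} (horth : ∀ i j, star (ψ i) * ψ j = if i = j then 1 else 0)
    {l₁ l₂ : List ι} (hlen : l₁.length = l₂.length) (x : A) :
    star (l₁.map ψ).prod * ((l₂.map ψ).prod * x) = if l₁ = l₂ then x else 0 := by
  induction l₁ generalizing l₂ with
  | nil =>
    obtain rfl : l₂ = [] := List.length_eq_zero_iff.mp hlen.symm
    simp
  | cons a l₁ ih =>
    obtain _ | ⟨b, l₂⟩ := l₂
    · simp at hlen
    · have hstep : star ((a :: l₁).map ψ).prod * (((b :: l₂).map ψ).prod * x)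
          = star (l₁.map ψ).prod * ((star (ψ a) * ψ b) * ((l₂.map ψ).prod * x)) := by
        simp only [List.map_cons, List.prod_cons, star_mul, mul_assoc]
      rw [hstep, horth]
      by_cases hab : a = b
      · simp [hab, ih (by simpa using hlen)]
      · simp [hab]

theorem Equiv.Perm.coe_eq_cons_castSucc_iff {n : ℕ} (q p : Perm (Fin (n + 1))) (k : Fin (n + 1)) :
    ⇑q = Fin.cons k (fun i => p i.castSucc) ↔ q 0 = k ∧ p = q * finRotate (n + 1) := by
  constructor
  · intro hq
    have hsucc : ∀ i : Fin n, p i.castSucc = q i.succ := fun i => by simp [hq]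
    have hlast : p (Fin.last n) = q 0 := by
      obtain ⟨i, hi⟩ | hi := Fin.eq_castSucc_or_eq_last (p.symm (q 0))
      · have : q i.succ = q 0 := by rw [← hsucc, ← hi, Equiv.apply_symm_apply]
        exact absurd (q.injective this) (Fin.succ_ne_zero i)
      · rw [← hi, Equiv.apply_symm_apply]
    refine ⟨by simp [hq], Perm.ext fun i => Fin.lastCases ?_ (fun i => ?_) i⟩
    · simp [hlast]
    · simp [hsucc, Fin.coeSucc_eq_succ]
  · rintro ⟨rfl, rfl⟩
    ext i
    refine Fin.cases ?_ (fun i => ?_) i <;> simp [Fin.coeSucc_eq_succ]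

theorem star_ofFn_prod_mul_mul_ofFn_prod {A : Type*} [MonoidWithZero A] [StarMul A] {n : ℕ}
    {ψ : Fin (n + 1) → A} (horth : ∀ i j, star (ψ i) * ψ j = if i = j then 1 else 0)
    (q p : Perm (Fin (n + 1))) (k : Fin (n + 1)) :
    star (List.ofFn fun i => ψ (q i)).prod * (ψ k * (List.ofFn fun i => ψ (p i)).prod)
      = if q 0 = k ∧ p = q * finRotate (n + 1) then ψ k else 0 := by
  have hwords : ψ k * (List.ofFn fun i => ψ (p i)).prod
      = ((List.ofFn (Fin.cons k fun i => p i.castSucc)).map ψ).prod * ψ (p (Fin.last n)) := by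
    rw [List.ofFn_succ', List.concat_eq_append, List.prod_append, List.ofFn_succ]
    simp [mul_assoc, Function.comp_def]
  have hq : (List.ofFn fun i => ψ (q i)) = (List.ofFn q).map ψ := List.map_ofFn.symm
  rw [hwords, hq, star_prod_map_mul_prod_map_mul horth (by simp)]
  simp only [List.ofFn_inj, Equiv.Perm.coe_eq_cons_castSucc_iff]
  split_ifs with h
  · simp [h.2, h.1]
  · rfl

theorem sign_mul_sign_mul_finRotate {n : ℕ} (q : Perm (Fin (n + 1))) :
    (Perm.sign q : ℤ) * (Perm.sign (q * finRotate (n + 1)) : ℤ) = (-1) ^ n := by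
  rw [← Units.val_mul, map_mul, ← mul_assoc, Int.units_mul_self, one_mul, sign_finRotate]
  simp

theorem Equiv.Perm.card_filter_apply_zero_eq (n : ℕ) (k : Fin (n + 1)) :
    #{q : Perm (Fin (n + 1)) | q 0 = k} = n ! := by
  rw [Finset.card_equiv Perm.decomposeFin (t := {k} ×ˢ univ)]
  · simp [Fintype.card_perm]
  · intro q
    obtain ⟨⟨j, σ⟩, rfl⟩ := Perm.decomposeFin.symm.surjective q
    simp [eq_comm]

def antisymmetrizedProd {A : Type*} [Ring A] {d : ℕ} (ψ : Fin d → A) : A :=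
  ∑ p : Perm (Fin d), (Perm.sign p : ℤ) • (List.ofFn fun i => ψ (p i)).prod

theorem star_antisymmetrizedProd_mul_mul {A : Type*} [Ring A] [StarRing A] {n : ℕ}
    {ψ : Fin (n + 1) → A} (horth : ∀ i j, star (ψ i) * ψ j = if i = j then 1 else 0)
    (k : Fin (n + 1)) :
    star (antisymmetrizedProd ψ) * (ψ k * antisymmetrizedProd ψ)
      = ((-1 : ℤ) ^ n * n !) • ψ k := by
  have hinner : ∀ q : Perm (Fin (n + 1)),
      ∑ p : Perm (Fin (n + 1)), (Perm.sign p : ℤ) • (Perm.sign q : ℤ) •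
        (if q 0 = k ∧ p = q * finRotate (n + 1) then ψ k else 0)
        = if q 0 = k then (-1 : ℤ) ^ n • ψ k else 0 := fun q => by
    simp_rw [and_comm, ite_and, smul_ite, smul_zero, Finset.sum_ite_eq', mem_univ, if_true,
      smul_smul, mul_comm _ (Perm.sign q : ℤ), sign_mul_sign_mul_finRotate]
  calc star (antisymmetrizedProd ψ) * (ψ k * antisymmetrizedProd ψ)
      = ∑ q : Perm (Fin (n + 1)), if q 0 = k then (-1 : ℤ) ^ n • ψ k else 0 := by
        simp only [antisymmetrizedProd, star_sum, star_zsmul, Finset.sum_mul, Finset.mul_sum,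
          smul_mul_assoc, mul_smul_comm, star_ofFn_prod_mul_mul_ofFn_prod horth, Finset.smul_sum]
        rw [Finset.sum_comm]
        exact Finset.sum_congr rfl fun q _ => hinner q
    _ = ∑ q : Perm (Fin (n + 1)) with q 0 = k, (-1 : ℤ) ^ n • ψ k :=
        (Finset.sum_filter _ _).symm
    _ = ((-1 : ℤ) ^ n * n !) • ψ k := by
        rw [Finset.sum_const, Perm.card_filter_apply_zero_eq, ← natCast_zsmul, smul_smul,
          mul_comm]

theorem antisymmetric_special_conjugate_general
    {A : Type*} [NormedRing A] [StarRing A]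
    {d : ℕ} (hd : 0 < d) (ψ : Fin d → A)
    (horth : ∀ i j, star (ψ i) * ψ j = if i = j then 1 else 0)
    (hsum : ∑ k, ψ k * star (ψ k) = 1) :
    star (∑ p : Equiv.Perm (Fin d), (Equiv.Perm.sign p : ℤ) •
          (List.ofFn fun i => ψ (p i)).prod)
        * (∑ k, ψ k * (∑ p : Equiv.Perm (Fin d), (Equiv.Perm.sign p : ℤ) •
            (List.ofFn fun i => ψ (p i)).prod) * star (ψ k))
      = (((-1 : ℤ) ^ (d - 1)) * (d - 1).factorial) • 1 := by
  obtain ⟨n, rfl⟩ := Nat.exists_eq_succ_of_ne_zero hd.ne'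
  change star (antisymmetrizedProd ψ) * ∑ k, ψ k * antisymmetrizedProd ψ * star (ψ k) = _
  calc star (antisymmetrizedProd ψ) * ∑ k, ψ k * antisymmetrizedProd ψ * star (ψ k)
      = ∑ k, (star (antisymmetrizedProd ψ) * (ψ k * antisymmetrizedProd ψ)) * star (ψ k) := by
        simp only [Finset.mul_sum, mul_assoc]
    _ = ((-1 : ℤ) ^ n * n !) • ∑ k, ψ k * star (ψ k) := by
        simp only [star_antisymmetrizedProd_mul_mul horth, smul_mul_assoc, Finset.smul_sum]
    _ = ((-1 : ℤ) ^ (n + 1 - 1) * (n + 1 - 1)!) • 1 := by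
        rw [hsum, Nat.add_sub_cancel]

/-- For a Cuntz family `ψ_1, …, ψ_d` (`d ≥ 1`) with canonical
endomorphism `σ(t) := Σ_k ψ_k t ψ_k*` and
`S := Σ_{p ∈ S_d} sign(p) ψ_{p(1)} ⋯ ψ_{p(d)}`, one has
`S* σ(S) = (−1)^{d−1} (d−1)! ⬝ 1`. -/
theorem antisymmetric_special_conjugate
    {A : Type*} [NormedRing A] [StarRing A] [CStarRing A]
    [NormedAlgebra ℂ A] [StarModule ℂ A] [CompleteSpace A]
    {d : ℕ} (hd : 0 < d) (ψ : Fin d → A)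
    (horth : ∀ i j, star (ψ i) * ψ j = if i = j then 1 else 0)
    (hsum : ∑ k, ψ k * star (ψ k) = 1) :
    star (∑ p : Equiv.Perm (Fin d), (Equiv.Perm.sign p : ℤ) •
          (List.ofFn fun i => ψ (p i)).prod)
        * (∑ k, ψ k * (∑ p : Equiv.Perm (Fin d), (Equiv.Perm.sign p : ℤ) •
            (List.ofFn fun i => ψ (p i)).prod) * star (ψ k))
      = (((-1 : ℤ) ^ (d - 1)) * (d - 1).factorial) • 1 :=
  antisymmetric_special_conjugate_general hd ψ horth hsum
end
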